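/- Assume the Setup with M ≥ 2, N ≥ 4M, and the separation condition. If a_j ∈ C and a_{j+1} ∈ C (indices modulo N), then a_{j−1} ∉ C and a_{j+2} ∉ C, and there exists k ∈ {0,…,M−1} such that θ_k lies in the closed torus arc [a_j, a_{j+1}]_T from a_j to a_{j+1} of length 1/N. -/

import Mathlib

open scoped BigOperators

open Classical in
/-- The Fejér kernel: `F_n(x) = n` if `x ∈ 2πℤ`, else `(1/n)·sin²(nx/2)/sin²(x/2)`. -/
noncomputable def fejer (n : ℕ) (x : ℝ) : ℝ :=
  if ∃ k : ℤ, x = 2 * Real.pi * (k : ℝ) then (n : ℝ)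
  else (1 / (n : ℝ)) * (Real.sin ((n : ℝ) * x / 2)) ^ 2 / (Real.sin (x / 2)) ^ 2

/-- The normalized Fejér kernel `F̃_N = F_N / N`. -/
noncomputable def fejerN (n : ℕ) (x : ℝ) : ℝ := fejer n x / (n : ℝ)

/-- Distance on the torus `ℝ/ℤ`: `|x − y|_T = min_{k ∈ ℤ} |x − y − k|`. -/
noncomputable def distT (x y : ℝ) : ℝ := sInf {d : ℝ | ∃ k : ℤ, d = |x - y - (k : ℝ)|}

/-- State-averaged QPE output probability `p_j`. -/
noncomputable def pdist (M N : ℕ) (θ : ℕ → ℝ) (j : ℤ) : ℝ :=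
  (1 / (M : ℝ)) * ∑ k ∈ Finset.range M, fejerN N (2 * Real.pi * (θ k - (j : ℝ) / (N : ℝ)))

noncomputable def tauC : ℝ := 4 / Real.pi ^ 2

noncomputable def sigmaC : ℝ := (2 / Real.pi ^ 2) * ∑' l : ℕ, (1 : ℝ) / (3 * (l : ℝ) + 1) ^ 2

noncomputable def dC (N : ℕ) : ℝ := (1 - 4 / Real.pi ^ 2) / (N : ℝ) ^ 2

noncomputable def gammaC : ℝ :=
  1 + (1 / Real.pi ^ 2) * (Real.pi ^ 2 / 6 - ∑' l : ℕ, (1 : ℝ) / (3 * (l : ℝ) + 1) ^ 2)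

open Real

lemma TCD.sin_sq_add_int_mul_pi (x : ℝ) (n : ℤ) : sin (x + n * π) ^ 2 = sin x ^ 2 := by
  have h0 : sin ((n:ℝ) * π) = 0 := Real.sin_int_mul_pi n
  have h1 : cos ((n:ℝ) * π) ^ 2 = 1 := by
    have := Real.sin_sq_add_cos_sq ((n:ℝ) * π); nlinarith
  rw [Real.sin_add, h0, mul_zero, add_zero, mul_pow, h1, mul_one]

lemma TCD.fejerN_eval (N : ℕ) (hN : 1 ≤ N) (x r : ℝ) (m : ℤ) (hx : x = r + m)
    (hr : ∀ k : ℤ, r ≠ (k:ℝ)) :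
    fejerN N (2 * π * x) = sin ((N:ℝ) * π * r) ^ 2 / ((N:ℝ) * sin (π * r)) ^ 2 := by
  have hpi := Real.pi_ne_zero
  have hcond : ¬ ∃ k : ℤ, 2 * π * x = 2 * π * (k:ℝ) := by
    rintro ⟨k, hk⟩
    have hxk : x = (k:ℝ) := by
      have h2 : (2:ℝ) * π ≠ 0 := by positivity
      exact mul_left_cancel₀ h2 hk
    have : r = (k:ℝ) - (m:ℝ) := by rw [hx] at hxk; linarith
    exact hr (k - m) (by push_cast; linarith)
  rw [fejerN, fejer, if_neg hcond]
  have e1 : (N:ℝ) * (2 * π * x) / 2 = (N:ℝ) * π * r + (((N:ℤ) * m : ℤ):ℝ) * π := by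
    rw [hx]; push_cast; ring
  have e2 : (2 * π * x) / 2 = π * r + m * π := by rw [hx]; push_cast; ring
  rw [e1, e2, TCD.sin_sq_add_int_mul_pi _ ((N:ℤ) * m), TCD.sin_sq_add_int_mul_pi _ m]
  have hs : sin (π * r) ≠ 0 := by
    rw [Real.sin_ne_zero_iff]
    intro n hn
    exact hr n (mul_right_cancel₀ hpi (by linarith [hn]))
  have hN0 : (N:ℝ) ≠ 0 := by positivity
  field_simp
  try ring
  try tauto

lemma TCD.two_mul_le_sin_pi (t : ℝ) (ht0 : 0 ≤ t) (ht : t ≤ 1/2) : 2 * t ≤ sin (π * t) := by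
  have h := Real.mul_le_sin (x := π * t) (by positivity)
    (by nlinarith [Real.pi_pos])
  have hπ : π ≠ 0 := Real.pi_ne_zero
  calc 2 * t = 2 / π * (π * t) := by field_simp
    _ ≤ sin (π * t) := h

lemma TCD.frac_le_inv (N : ℕ) (hN : 1 ≤ N) (t : ℝ) (ht0 : 0 < t) (ht : t ≤ 1/2) :
    sin ((N:ℝ) * π * t) ^ 2 / ((N:ℝ) * sin (π * t)) ^ 2 ≤ 1 / (2 * (N:ℝ) * t) ^ 2 := by
  have hN0 : (0:ℝ) < N := by exact_mod_cast hN
  have hs := TCD.two_mul_le_sin_pi t ht0.le ht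
  have hd : (2 * (N:ℝ) * t) ^ 2 ≤ ((N:ℝ) * sin (π * t)) ^ 2 := by
    have h1 : 2 * (N:ℝ) * t ≤ (N:ℝ) * sin (π * t) := by nlinarith [mul_le_mul_of_nonneg_left hs hN0.le]
    exact pow_le_pow_left₀ (by positivity) h1 2
  exact div_le_div₀ zero_le_one (Real.sin_sq_le_one _) (by positivity) hd

lemma TCD.frac_le_beta (N : ℕ) (hN : 1 ≤ N) (t : ℝ) (ht1 : 1 / (N:ℝ) ≤ t) (ht : t ≤ 1/2) :
    sin ((N:ℝ) * π * t) ^ 2 / ((N:ℝ) * sin (π * t)) ^ 2 ≤ 1 / (2 + 2/π) ^ 2 := by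
  have hN0 : (0:ℝ) < N := by exact_mod_cast hN
  have hπ : (0:ℝ) < π := Real.pi_pos
  set s : ℝ := (N:ℝ) * t with hsdef
  have hs1 : 1 ≤ s := by
    rw [hsdef]; rw [div_le_iff₀ hN0] at ht1; linarith [ht1]
  have ht0 : 0 < t := lt_of_lt_of_le (by positivity) ht1
  have hsin := TCD.two_mul_le_sin_pi t ht0.le ht
  have hd : (2 * s) ^ 2 ≤ ((N:ℝ) * sin (π * t)) ^ 2 := by
    rw [hsdef]
    have h1 : 2 * ((N:ℝ) * t) ≤ (N:ℝ) * sin (π * t) := by nlinarith [mul_le_mul_of_nonneg_left hsin hN0.le]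
    exact pow_le_pow_left₀ (by positivity) h1 2
  have hA : sin ((N:ℝ) * π * t) ^ 2 = sin (π * (s - 1)) ^ 2 := by
    rw [show (N:ℝ) * π * t = π * (s - 1) + ((1:ℤ):ℝ) * π by rw [hsdef]; push_cast; ring]
    exact TCD.sin_sq_add_int_mul_pi _ 1
  have hβ : (0:ℝ) < 2 + 2/π := by positivity
  have step1 : sin ((N:ℝ) * π * t) ^ 2 / ((N:ℝ) * sin (π * t)) ^ 2
      ≤ sin (π * (s - 1)) ^ 2 / (2 * s) ^ 2 := by
    rw [hA]
    exact div_le_div₀ (sq_nonneg _) le_rfl (by positivity) hd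
  refine step1.trans ?_
  rcases le_or_gt s (1 + 1/π) with hc | hc
  · set u : ℝ := π * (s - 1) with hu
    have hu0 : 0 ≤ u := by rw [hu]; nlinarith
    have hu1 : u ≤ 1 := by
      rw [hu]
      have hs1' : s - 1 ≤ 1/π := by linarith
      have h2 := mul_le_mul_of_nonneg_left hs1' hπ.le
      have hinv : π * (1/π) = 1 := by field_simp
      linarith
    have hA2 : sin u ^ 2 ≤ u ^ 2 := Real.sin_sq_le_sq
    rw [div_le_div_iff₀ (by positivity) (by positivity)]
    have key : u * (2 + 2/π) ≤ 2 * s := by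
      have : u / π = s - 1 := by rw [hu]; field_simp
      have expand : u * (2 + 2/π) = 2 * u + 2 * (u / π) := by ring
      rw [expand, this]; linarith
    calc sin u ^ 2 * (2 + 2/π) ^ 2 ≤ u ^ 2 * (2 + 2/π) ^ 2 := by nlinarith [sq_nonneg (2 + 2/π)]
      _ = (u * (2 + 2/π)) ^ 2 := by ring
      _ ≤ (2 * s) ^ 2 := pow_le_pow_left₀ (mul_nonneg hu0 hβ.le) key 2
      _ = 1 * (2 * s) ^ 2 := by ring
  · have h2s : 2 + 2/π ≤ 2 * s := by
      have : (2:ℝ) + 2/π = 2 * (1 + 1/π) := by ring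
      linarith
    calc sin (π * (s-1)) ^ 2 / (2*s) ^ 2 ≤ 1 / (2*s) ^ 2 :=
          div_le_div₀ zero_le_one (Real.sin_sq_le_one _) (by positivity) le_rfl
      _ ≤ 1 / (2 + 2/π) ^ 2 := by
          apply one_div_le_one_div_of_le (by positivity)
          exact pow_le_pow_left₀ hβ.le h2s 2

lemma TCD.sin_sq_abs (c r : ℝ) : sin (c * |r|) ^ 2 = sin (c * r) ^ 2 := by
  rcases abs_cases r with ⟨h, _⟩ | ⟨h, _⟩
  · rw [h]
  · rw [h, mul_neg, Real.sin_neg]; ring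

lemma TCD.not_int (r : ℝ) (hlo : -(1/2) ≤ r) (hhi : r < 1/2) (h0 : r ≠ 0) :
    ∀ k : ℤ, r ≠ (k:ℝ) := by
  intro k hk
  have h1 : |(k:ℝ)| < 1 := by rw [← hk]; rw [abs_lt]; constructor <;> linarith
  have h1' := abs_lt.mp h1
  have h2 : (k:ℤ) = 0 := by
    have ha : (-1:ℤ) < k := by exact_mod_cast h1'.1
    have hb : k < (1:ℤ) := by exact_mod_cast h1'.2
    omega
  exact h0 (by rw [hk, h2]; norm_num)

lemma TCD.fejerN_le_inv (N : ℕ) (hN : 1 ≤ N) (x r : ℝ) (m : ℤ) (hx : x = r + m)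
    (hlo : -(1/2) ≤ r) (hhi : r < 1/2) (h0 : r ≠ 0) :
    fejerN N (2 * π * x) ≤ 1 / (2 * (N:ℝ) * |r|) ^ 2 := by
  rw [TCD.fejerN_eval N hN x r m hx (TCD.not_int r hlo hhi h0)]
  have hnum : sin ((N:ℝ) * π * r) ^ 2 = sin ((N:ℝ) * π * |r|) ^ 2 := (TCD.sin_sq_abs _ r).symm
  have hden : ((N:ℝ) * sin (π * r)) ^ 2 = ((N:ℝ) * sin (π * |r|)) ^ 2 := by
    rw [mul_pow, mul_pow, TCD.sin_sq_abs π r]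
  rw [hnum, hden]
  have habs : |r| ≤ 1/2 := abs_le.mpr ⟨by linarith, by linarith⟩
  exact TCD.frac_le_inv N hN |r| (abs_pos.mpr h0) habs

lemma TCD.fejerN_le_beta (N : ℕ) (hN : 1 ≤ N) (x r : ℝ) (m : ℤ) (hx : x = r + m)
    (hlo : -(1/2) ≤ r) (hhi : r < 1/2) (h1 : 1 / (N:ℝ) ≤ |r|) :
    fejerN N (2 * π * x) ≤ 1 / (2 + 2/π) ^ 2 := by
  have hN0 : (0:ℝ) < N := by exact_mod_cast hN
  have h0 : r ≠ 0 := by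
    intro h; rw [h, abs_zero] at h1
    have : (0:ℝ) < 1/(N:ℝ) := by positivity
    linarith
  rw [TCD.fejerN_eval N hN x r m hx (TCD.not_int r hlo hhi h0)]
  have hnum : sin ((N:ℝ) * π * r) ^ 2 = sin ((N:ℝ) * π * |r|) ^ 2 := (TCD.sin_sq_abs _ r).symm
  have hden : ((N:ℝ) * sin (π * r)) ^ 2 = ((N:ℝ) * sin (π * |r|)) ^ 2 := by
    rw [mul_pow, mul_pow, TCD.sin_sq_abs π r]
  rw [hnum, hden]
  have habs : |r| ≤ 1/2 := abs_le.mpr ⟨by linarith, by linarith⟩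
  exact TCD.frac_le_beta N hN |r| h1 habs

lemma TCD.sum_Icc_inv_sq (K : ℕ) (hK : 1 ≤ K) :
    ∑ n ∈ Finset.Icc 1 K, (1:ℝ) / (n:ℝ) ^ 2 ≤ 2 - 1 / (K:ℝ) := by
  induction K with
  | zero => omega
  | succ B ih =>
    rcases Nat.eq_or_lt_of_le hK with h1 | h1
    · rw [← h1]; norm_num
    · have hB : 1 ≤ B := by omega
      have hB0 : (0:ℝ) < B := by exact_mod_cast hB
      rw [Finset.sum_Icc_succ_top (by omega)]
      have := ih hB
      have hstep : (1:ℝ) / ((B:ℝ) + 1) ^ 2 ≤ 1 / (B:ℝ) - 1 / ((B:ℝ) + 1) := by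
        rw [div_sub_div _ _ (ne_of_gt hB0) (by positivity)]
        apply div_le_div₀ (by linarith) (by linarith) (by positivity)
        nlinarith
      push_cast
      linarith

lemma TCD.sum_inv_sq_int (T : Finset ℤ) (hT : ∀ m ∈ T, 1 ≤ m) :
    ∑ m ∈ T, (1:ℝ) / (m:ℝ) ^ 2 ≤ 2 := by
  classical
  have hinj : Set.InjOn Int.toNat T := by
    intro a ha b hb hab
    have := hT a ha; have := hT b hb; omega
  have hcast : ∑ m ∈ T, (1:ℝ) / (m:ℝ) ^ 2 = ∑ m ∈ T, (1:ℝ) / ((m.toNat : ℕ):ℝ) ^ 2 := by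
    apply Finset.sum_congr rfl; intro m hm
    have h1 := hT m hm
    have : ((m.toNat : ℕ):ℝ) = (m:ℝ) := by exact_mod_cast Int.toNat_of_nonneg (by omega)
    rw [this]
  have himg : ∑ n ∈ T.image Int.toNat, (1:ℝ) / (n:ℝ) ^ 2
      = ∑ m ∈ T, (1:ℝ) / ((m.toNat : ℕ):ℝ) ^ 2 :=
    Finset.sum_image (fun a ha b hb => hinj ha hb)
  rw [hcast, ← himg]
  set T' := T.image Int.toNat with hT'
  have hT'1 : ∀ n ∈ T', 1 ≤ n := by
    intro n hn; rw [hT', Finset.mem_image] at hn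
    obtain ⟨a, ha, rfl⟩ := hn; have := hT a ha; omega
  rcases T'.eq_empty_or_nonempty with h | h
  · rw [h]; simp
  · set K := T'.max' h with hK
    have hK1 : 1 ≤ K := hT'1 K (T'.max'_mem h)
    have hsub : T' ⊆ Finset.Icc 1 K := by
      intro n hn; rw [Finset.mem_Icc]
      exact ⟨hT'1 n hn, Finset.le_max' T' n hn⟩
    calc ∑ n ∈ T', (1:ℝ) / (n:ℝ) ^ 2 ≤ ∑ n ∈ Finset.Icc 1 K, (1:ℝ) / (n:ℝ) ^ 2 :=
          Finset.sum_le_sum_of_subset_of_nonneg hsub (by intro i _ _; positivity)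
      _ ≤ 2 - 1 / (K:ℝ) := TCD.sum_Icc_inv_sq K hK1
      _ ≤ 2 := by
          have : (0:ℝ) < K := by exact_mod_cast hK1
          have : (0:ℝ) < 1 / (K:ℝ) := by positivity
          linarith

lemma TCD.w_sum (β : ℝ) (hβ : 0 ≤ β) (S : Finset ℤ) :
    ∑ m ∈ S, (if m = 0 ∨ m = -1 then β else 1 / (36 * ((max m (-m-1) : ℤ):ℝ) ^ 2))
      ≤ 2 * β + 1/9 := by
  classical
  set w : ℤ → ℝ := fun m => if m = 0 ∨ m = -1 then β else 1 / (36 * ((max m (-m-1) : ℤ):ℝ) ^ 2)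
    with hw
  have hw0 : ∀ m, 0 ≤ w m := by
    intro m; rw [hw]; dsimp only
    split
    · exact hβ
    · positivity
  rw [← Finset.sum_filter_add_sum_filter_not S (fun m => m = 0 ∨ m = -1)]
  have hS0 : ∑ m ∈ S.filter (fun m => m = 0 ∨ m = -1), w m ≤ 2 * β := by
    have hsub : S.filter (fun m => m = 0 ∨ m = -1) ⊆ ({0, -1} : Finset ℤ) := by
      intro m hm
      rcases (Finset.mem_filter.mp hm).2 with h | h <;> simp [h]
    calc ∑ m ∈ S.filter (fun m => m = 0 ∨ m = -1), w m
        = ∑ m ∈ S.filter (fun m => m = 0 ∨ m = -1), β := by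
          apply Finset.sum_congr rfl; intro m hm
          rw [hw]; exact if_pos (Finset.mem_filter.mp hm).2
      _ = (S.filter (fun m => m = 0 ∨ m = -1)).card * β := by
          rw [Finset.sum_const, nsmul_eq_mul]
      _ ≤ 2 * β := by
          have hcard : (S.filter (fun m => m = 0 ∨ m = -1)).card ≤ 2 := by
            have := Finset.card_le_card hsub
            simpa using this
          have : ((S.filter (fun m => m = 0 ∨ m = -1)).card : ℝ) ≤ 2 := by exact_mod_cast hcard
          exact mul_le_mul_of_nonneg_right this hβ
  set S' := S.filter (fun m => ¬(m = 0 ∨ m = -1)) with hS'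
  have hrest : ∑ m ∈ S', w m ≤ 1/9 := by
    rw [← Finset.sum_filter_add_sum_filter_not S' (fun m => 1 ≤ m)]
    have hpos : ∑ m ∈ S'.filter (fun m => 1 ≤ m), w m ≤ 1/18 := by
      have heq : ∑ m ∈ S'.filter (fun m => 1 ≤ m), w m
          = ∑ m ∈ S'.filter (fun m => 1 ≤ m), (1/36) * (1 / (m:ℝ)^2) := by
        apply Finset.sum_congr rfl; intro m hm
        have hm1 : 1 ≤ m := (Finset.mem_filter.mp hm).2
        have hnot : ¬(m = 0 ∨ m = -1) := by omega
        rw [hw]; dsimp only; rw [if_neg hnot, max_eq_left (by omega : -m-1 ≤ m)]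
        rw [one_div, mul_inv, one_div]; ring
      rw [heq, ← Finset.mul_sum]
      have := TCD.sum_inv_sq_int (S'.filter (fun m => 1 ≤ m))
        (fun m hm => (Finset.mem_filter.mp hm).2)
      nlinarith
    have hneg : ∑ m ∈ S'.filter (fun m => ¬ 1 ≤ m), w m ≤ 1/18 := by
      set B := S'.filter (fun m => ¬ 1 ≤ m) with hB
      have hB2 : ∀ m ∈ B, m ≤ -2 := by
        intro m hm
        rw [hB, Finset.mem_filter] at hm
        have := hm.2
        rw [hS', Finset.mem_filter] at hm
        have h2 := hm.1.2
        omega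
      have hinj : ∀ x ∈ B, ∀ y ∈ B, -x-1 = -y-1 → x = y := by intro x _ y _ h; omega
      have hinj' : ∀ x ∈ B, ∀ y ∈ B, (fun m : ℤ => -m-1) x = (fun m : ℤ => -m-1) y → x = y := hinj
      have himg : ∑ n ∈ B.image (fun m : ℤ => -m-1), (1/36) * (1 / (n:ℝ)^2)
          = ∑ m ∈ B, (1/36) * (1 / ((-m-1 : ℤ):ℝ)^2) := Finset.sum_image hinj'
      have heq : ∑ m ∈ B, w m = ∑ m ∈ B, (1/36) * (1 / ((-m-1 : ℤ):ℝ)^2) := by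
        apply Finset.sum_congr rfl; intro m hm
        have hm2 := hB2 m hm
        have hnot : ¬(m = 0 ∨ m = -1) := by omega
        rw [hw]; dsimp only; rw [if_neg hnot, max_eq_right (by omega : m ≤ -m-1)]
        rw [one_div, mul_inv, one_div]; ring
      rw [heq, ← himg, ← Finset.mul_sum]
      have := TCD.sum_inv_sq_int (B.image (fun m : ℤ => -m-1)) (by
        intro n hn
        rw [Finset.mem_image] at hn
        obtain ⟨a, ha, rfl⟩ := hn
        have := hB2 a ha; omega)
      nlinarith
    linarith
  linarith

lemma TCD.detect_bound (M N : ℕ) (hN : 8 ≤ N) (f r : ℕ → ℝ)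
    (hbound : ∀ k, k < M → f k ≤ 1 / (2 * (N:ℝ) * |r k|) ^ 2)
    (hbeta : ∀ k, k < M → f k ≤ 1 / (2 + 2/π) ^ 2)
    (hpair : ∀ k l, k < M → l < M → k ≠ l → 3 / (N:ℝ) ≤ |r k - r l|) :
    ∑ k ∈ Finset.range M, f k ≤ 2 * (1 / (2 + 2/π) ^ 2) + 1/9 := by
  classical
  have hN0 : (0:ℝ) < N := by positivity
  have hπ : (0:ℝ) < π := Real.pi_pos
  have hβ0 : (0:ℝ) ≤ 1 / (2 + 2/π) ^ 2 := by positivity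
  set σ : ℕ → ℤ := fun k => ⌊r k * N / 3⌋ with hσ
  have hterm : ∀ k ∈ Finset.range M, f k ≤
      (if σ k = 0 ∨ σ k = -1 then 1 / (2 + 2/π) ^ 2
        else 1 / (36 * ((max (σ k) (-(σ k)-1) : ℤ):ℝ) ^ 2)) := by
    intro k hk
    rw [Finset.mem_range] at hk
    split
    · exact hbeta k hk
    · rename_i hnot
      have hfl : ((σ k : ℤ):ℝ) ≤ r k * N / 3 := Int.floor_le _
      have hfu : r k * N / 3 < (σ k : ℤ) + 1 := Int.lt_floor_add_one _
      rcases (by omega : 1 ≤ σ k ∨ σ k ≤ -2) with hm | hm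
      · have hmax : max (σ k) (-(σ k)-1) = σ k := max_eq_left (by omega)
        have hm1 : (1:ℝ) ≤ (σ k : ℝ) := by exact_mod_cast hm
        have hr1 : 3 * (σ k : ℝ) / N ≤ r k := by
          rw [div_le_iff₀ hN0]
          linarith
        have hrpos : 0 < r k := by
          have : (0:ℝ) < 3 * (σ k : ℝ) / N := by positivity
          linarith
        have habs : |r k| = r k := abs_of_pos hrpos
        have h6 : (6 * (σ k : ℝ)) ≤ 2 * N * |r k| := by
          rw [habs]
          calc (6:ℝ) * (σ k : ℝ) = 2 * N * (3 * (σ k : ℝ) / N) := by field_simp; ring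
            _ ≤ 2 * N * r k := by
                apply mul_le_mul_of_nonneg_left hr1 (by positivity)
        rw [hmax]
        refine (hbound k hk).trans ?_
        have : (6 * (σ k : ℝ)) ^ 2 ≤ (2 * N * |r k|) ^ 2 :=
          pow_le_pow_left₀ (by positivity) h6 2
        calc 1 / (2 * (N:ℝ) * |r k|) ^ 2 ≤ 1 / (6 * (σ k : ℝ)) ^ 2 := by
              apply one_div_le_one_div_of_le (by positivity) this
          _ = 1 / (36 * ((σ k : ℤ):ℝ) ^ 2) := by ring_nf
      · have hmax : max (σ k) (-(σ k)-1) = -(σ k)-1 := max_eq_right (by omega)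
        have hm1 : (1:ℝ) ≤ (-(σ k : ℝ)-1) := by
          have h : (1:ℤ) ≤ -(σ k)-1 := by omega
          exact_mod_cast h
        have hru : r k < 3 * ((σ k : ℝ) + 1) / N := by
          rw [lt_div_iff₀ hN0]
          linarith
        have hrneg : r k < 0 := by
          have h1 : 3 * ((σ k : ℝ) + 1) / N ≤ 0 := by
            apply div_nonpos_of_nonpos_of_nonneg _ hN0.le
            nlinarith
          linarith
        have habs : |r k| = -r k := abs_of_neg hrneg
        have h6 : (6 * (-(σ k : ℝ)-1)) ≤ 2 * N * |r k| := by
          rw [habs]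
          have hq : 3 * (-(σ k : ℝ)-1) / N ≤ -r k := by
            rw [div_le_iff₀ hN0]
            nlinarith [hru, hN0]
          calc (6:ℝ) * (-(σ k : ℝ)-1) = 2 * N * (3 * (-(σ k : ℝ)-1) / N) := by
                field_simp; ring
            _ ≤ 2 * N * (-r k) := mul_le_mul_of_nonneg_left hq (by positivity)
        rw [hmax]
        refine (hbound k hk).trans ?_
        have hsq : (6 * (-(σ k : ℝ)-1)) ^ 2 ≤ (2 * N * |r k|) ^ 2 :=
          pow_le_pow_left₀ (by positivity) h6 2
        have hcast : ((-(σ k)-1 : ℤ):ℝ) = -(σ k : ℝ)-1 := by push_cast; ring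
        calc 1 / (2 * (N:ℝ) * |r k|) ^ 2 ≤ 1 / (6 * (-(σ k : ℝ)-1)) ^ 2 := by
              apply one_div_le_one_div_of_le (by positivity) hsq
          _ = 1 / (36 * ((-(σ k)-1 : ℤ):ℝ) ^ 2) := by rw [hcast]; ring_nf
  have hinj : ∀ x ∈ Finset.range M, ∀ y ∈ Finset.range M, σ x = σ y → x = y := by
    intro x hx y hy hxy
    by_contra hne
    rw [Finset.mem_range] at hx hy
    have hp := hpair x y hx hy hne
    have hx1 : ((σ x : ℤ):ℝ) ≤ r x * N / 3 := Int.floor_le _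
    have hx2 : r x * N / 3 < (σ x : ℤ) + 1 := Int.lt_floor_add_one _
    have hy1 : ((σ y : ℤ):ℝ) ≤ r y * N / 3 := Int.floor_le _
    have hy2 : r y * N / 3 < (σ y : ℤ) + 1 := Int.lt_floor_add_one _
    rw [hxy] at hx1 hx2
    have habs : |r x * N / 3 - r y * N / 3| < 1 := by
      rw [abs_lt]; constructor <;> linarith
    have hfact : |r x * N / 3 - r y * N / 3| = |r x - r y| * (N / 3) := by
      rw [show r x * N / 3 - r y * N / 3 = (r x - r y) * (N / 3) by ring]
      rw [abs_mul, abs_of_pos (by positivity : (0:ℝ) < (N:ℝ)/3)]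
    rw [hfact] at habs
    have : (3 / (N:ℝ)) * ((N:ℝ)/3) ≤ |r x - r y| * (N/3) :=
      mul_le_mul_of_nonneg_right hp (by positivity)
    have h33 : (3 / (N:ℝ)) * ((N:ℝ)/3) = 1 := by field_simp
    linarith
  calc ∑ k ∈ Finset.range M, f k
      ≤ ∑ k ∈ Finset.range M, (if σ k = 0 ∨ σ k = -1 then 1 / (2 + 2/π) ^ 2
          else 1 / (36 * ((max (σ k) (-(σ k)-1) : ℤ):ℝ) ^ 2)) := Finset.sum_le_sum hterm
    _ = ∑ m ∈ (Finset.range M).image σ, (if m = 0 ∨ m = -1 then 1 / (2 + 2/π) ^ 2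
          else 1 / (36 * ((max m (-m-1) : ℤ):ℝ) ^ 2)) := (Finset.sum_image
            (f := fun m : ℤ => if m = 0 ∨ m = -1 then 1 / (2 + 2/π) ^ 2
              else 1 / (36 * ((max m (-m-1) : ℤ):ℝ) ^ 2)) hinj).symm
    _ ≤ 2 * (1 / (2 + 2/π) ^ 2) + 1/9 := TCD.w_sum _ hβ0 _

lemma TCD.numeric : 2 * (1 / (2 + 2/π) ^ 2) + 1/9 < 4 / π ^ 2 := by
  have h1 : (3.14:ℝ) < π := Real.pi_gt_d2
  have h2 : π < 3.15 := Real.pi_lt_d2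
  have hπ : (0:ℝ) < π := by linarith
  have hβ : (0:ℝ) < 2 + 2/π := by positivity
  have hb1 : 2 + 2/3.14 ≥ 2 + 2/π := by
    have : 2/π ≤ 2/3.14 := by
      apply div_le_div_of_nonneg_left (by norm_num) (by norm_num) h1.le
    linarith
  have hkey1 : 2 * (1 / (2 + 2/π) ^ 2) ≤ 2 * (1 / (2 + 2/3.15) ^ 2) := by
    have hmono : (2:ℝ) + 2/3.15 ≤ 2 + 2/π := by
      have : 2/3.15 ≤ 2/π := by
        apply div_le_div_of_nonneg_left (by norm_num) hπ h2.le
      linarith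
    have : (2 + 2/3.15:ℝ) ^ 2 ≤ (2 + 2/π) ^ 2 :=
      pow_le_pow_left₀ (by norm_num) hmono 2
    have h0 : (0:ℝ) < (2 + 2/3.15) ^ 2 := by norm_num
    nlinarith [one_div_le_one_div_of_le h0 this]
  have hkey2 : (4:ℝ) / 3.15 ^ 2 ≤ 4 / π ^ 2 := by
    apply div_le_div_of_nonneg_left (by norm_num) (by positivity)
    nlinarith
  have : 2 * (1 / (2 + 2/3.15) ^ 2) + 1/9 < (4:ℝ) / 3.15 ^ 2 := by norm_num
  linarith

noncomputable def TCD.rep (x : ℝ) : ℝ := Int.fract (x + 1/2) - 1/2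

lemma TCD.rep_lo (x : ℝ) : -(1/2) ≤ TCD.rep x := by
  have := Int.fract_nonneg (x + 1/2)
  unfold TCD.rep; linarith

lemma TCD.rep_hi (x : ℝ) : TCD.rep x < 1/2 := by
  have := Int.fract_lt_one (x + 1/2)
  unfold TCD.rep; linarith

lemma TCD.rep_spec (x : ℝ) : ∃ m : ℤ, x = TCD.rep x + m := by
  refine ⟨⌊x + 1/2⌋, ?_⟩
  have h := Int.self_sub_floor (x + 1/2)
  unfold TCD.rep
  rw [← h]; ring

lemma TCD.int_window (a b : ℝ) (ha1 : -(1/2) ≤ a) (ha2 : a < 1/2)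
    (hb1 : -(1/2) ≤ b) (hb2 : b < 1/2) (h : ∃ m : ℤ, a - b = m) : a = b := by
  obtain ⟨m, hm⟩ := h
  have h1 : (-1:ℝ) < m := by rw [← hm]; linarith
  have h2 : (m:ℝ) < 1 := by rw [← hm]; linarith
  have hm0 : m = 0 := by
    have hA : (-1:ℤ) < m := by exact_mod_cast h1
    have hB : m < (1:ℤ) := by exact_mod_cast h2
    omega
  rw [hm0] at hm; push_cast at hm; linarith

lemma TCD.distT_le (x y : ℝ) (m : ℤ) : distT x y ≤ |x - y - (m:ℝ)| := by
  apply csInf_le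
  · exact ⟨0, by rintro d ⟨k, rfl⟩; exact abs_nonneg _⟩
  · exact ⟨m, rfl⟩


set_option maxHeartbeats 2000000 in
/-- if two adjacent grid points are both in `C`, the two outer
neighbors are not in `C`, and an eigenphase lies (mod 1) in the closed forward
arc `[a_j, a_{j+1}]_T`. -/
theorem two_consecutive_detections
    (M N : ℕ) (hM : 2 ≤ M) (hN : 4 * M ≤ N)
    (θ : ℕ → ℝ)
    (hθ01 : ∀ k, k < M → θ k ∈ Set.Ico (0 : ℝ) 1)
    (hθmono : ∀ k, k + 1 < M → θ k < θ (k + 1))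
    (hθper : ∀ k, θ (k + M) = θ k)
    (hsep : ∀ k, (3 : ℝ) / (N : ℝ) ≤ distT (θ (k + 1)) (θ k))
    (j : ℤ) (hpj : tauC / (M : ℝ) ≤ pdist M N θ j)
    (hpj1 : tauC / (M : ℝ) ≤ pdist M N θ (j + 1)) :
    pdist M N θ (j - 1) < tauC / (M : ℝ) ∧
    pdist M N θ (j + 2) < tauC / (M : ℝ) ∧
    ∃ k : ℕ, k < M ∧ ∃ m : ℤ,
      θ k + (m : ℝ) ∈ Set.Icc ((j : ℝ) / (N : ℝ)) (((j : ℝ) + 1) / (N : ℝ)) := by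
  have hN8 : 8 ≤ N := by omega
  have hN1 : 1 ≤ N := by omega
  have hN0 : (0:ℝ) < N := by positivity
  have hN0' : (8:ℝ) ≤ N := by exact_mod_cast hN8
  have hM0 : (0:ℝ) < M := by positivity
  have hπ : (0:ℝ) < π := Real.pi_pos
  -- gap lemmas
  have hg1 : ∀ k, k + 1 < M → 3/(N:ℝ) ≤ θ (k+1) - θ k := by
    intro k hk
    have h := hsep k
    have hd := TCD.distT_le (θ (k+1)) (θ k) 0
    have hmono := hθmono k hk
    rw [Int.cast_zero, sub_zero, abs_of_pos (by linarith)] at hd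
    linarith
  have hg2 : 3/(N:ℝ) ≤ 1 + θ 0 - θ (M-1) := by
    have h := hsep (M-1)
    have e : M - 1 + 1 = M := by omega
    rw [e] at h
    have e2 : θ M = θ 0 := by have := hθper 0; rwa [Nat.zero_add] at this
    rw [e2] at h
    have hd := TCD.distT_le (θ 0) (θ (M-1)) (-1)
    have h0 := hθ01 0 (by omega)
    have h1 := hθ01 (M-1) (by omega)
    rw [Set.mem_Ico] at h0 h1
    rw [Int.cast_neg, Int.cast_one, sub_neg_eq_add, abs_of_pos (by linarith)] at hd
    linarith
  have hg3 : ∀ k d, k + d < M → 3*(d:ℝ)/(N:ℝ) ≤ θ (k+d) - θ k := by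
    intro k d
    induction d with
    | zero => intro _; norm_num
    | succ n ih =>
      intro h
      have h1 := ih (by omega)
      have h2 := hg1 (k+n) (by omega)
      have : θ (k + (n+1)) = θ ((k+n) + 1) := by ring_nf
      rw [this]
      push_cast
      push_cast at h1
      have e : 3*((n:ℝ)+1)/(N:ℝ) = 3*(n:ℝ)/(N:ℝ) + 3/(N:ℝ) := by ring
      rw [e]
      linarith
  have hg4 : ∀ k l, k < l → l < M → 3*((M:ℝ) - l + k)/(N:ℝ) ≤ 1 - (θ l - θ k) := by
    intro k l hkl hlM
    have h1 := hg3 0 k (by omega)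
    rw [Nat.zero_add] at h1
    have h2 := hg3 l (M-1-l) (by omega)
    have e : l + (M-1-l) = M - 1 := by omega
    rw [e] at h2
    have ecast : ((M-1-l : ℕ):ℝ) = (M:ℝ) - 1 - l := by
      have : ((M-1-l : ℕ):ℕ) + l + 1 = M := by omega
      have := congrArg (fun n : ℕ => (n:ℝ)) this
      push_cast at this
      linarith
    rw [ecast] at h2
    have e3 : 3*((M:ℝ) - l + k)/(N:ℝ)
        = 3*(k:ℝ)/(N:ℝ) + 3/(N:ℝ) + 3*((M:ℝ)-1-l)/(N:ℝ) := by ring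
    rw [e3]
    linarith
  -- pairwise separation
  have haux : ∀ k l, l < k → k < M → ∀ u : ℝ,
      (∃ m : ℤ, θ k - θ l - u = (m:ℝ)) → |u| < 1 → 3/(N:ℝ) ≤ |u| := by
    intro k l hlk hkM u hu h1
    have ht1 : 3/(N:ℝ) ≤ θ k - θ l := by
      have h := hg3 l (k-l) (by omega)
      have e : l + (k-l) = k := by omega
      rw [e] at h
      have h1' : (1:ℝ) ≤ ((k-l:ℕ):ℝ) := by
        have : 1 ≤ k - l := by omega
        exact_mod_cast this
      have : 3/(N:ℝ) ≤ 3*((k-l:ℕ):ℝ)/(N:ℝ) := by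
        rw [div_le_div_iff₀ hN0 hN0]
        nlinarith
      linarith [this]
    have ht2 : θ k - θ l ≤ 1 - 3/(N:ℝ) := by
      have h := hg4 l k hlk hkM
      have hb : (1:ℝ) ≤ (M:ℝ) - k + l := by
        have : k + 1 ≤ M := by omega
        have hc : ((k:ℝ) + 1) ≤ (M:ℝ) := by exact_mod_cast this
        have hl0 : (0:ℝ) ≤ l := by positivity
        linarith
      have : 3/(N:ℝ) ≤ 3*((M:ℝ) - k + l)/(N:ℝ) := by
        rw [div_le_div_iff₀ hN0 hN0]
        nlinarith
      linarith
    obtain ⟨m, hm⟩ := hu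
    have hNpos : (0:ℝ) < 3/(N:ℝ) := by positivity
    have hrange : (-1:ℝ) < (m:ℝ) ∧ (m:ℝ) < 2 := by
      rw [abs_lt] at h1
      constructor <;> nlinarith [hm, ht1, ht2]
    have : m = 0 ∨ m = 1 := by
      have hA : (-1:ℤ) < m := by exact_mod_cast hrange.1
      have hB : (m:ℤ) < 2 := by exact_mod_cast hrange.2
      omega
    rcases this with h | h
    · rw [h] at hm; push_cast at hm
      have : u = θ k - θ l := by linarith
      rw [this, abs_of_pos (by linarith)]
      linarith
    · rw [h] at hm; push_cast at hm
      have : u = θ k - θ l - 1 := by linarith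
      have hneg : u < 0 := by rw [this]; linarith
      rw [this, abs_of_neg (by linarith)]
      linarith
  have hsep_pair : ∀ k l, k < M → l < M → k ≠ l → ∀ u : ℝ,
      (∃ m : ℤ, θ k - θ l - u = (m:ℝ)) → |u| < 1 → 3/(N:ℝ) ≤ |u| := by
    intro k l hkM hlM hne u hu h1
    rcases Nat.lt_or_ge k l with h | h
    · obtain ⟨m, hm⟩ := hu
      have h2 : θ l - θ k - (-u) = ((-m : ℤ):ℝ) := by push_cast; linarith
      have := haux l k h hlM (-u) ⟨-m, h2⟩ (by rwa [abs_neg])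
      rwa [abs_neg] at this
    · exact haux k l (by omega) hkM u hu h1
  -- continue
  have hinv8 : 1/(N:ℝ) ≤ 1/8 := by
    rw [div_le_div_iff₀ hN0 (by norm_num)]; linarith
  have hthresh : ∀ i : ℤ, (∀ k, k < M → 1/(N:ℝ) ≤ |TCD.rep (θ k - (i:ℝ)/(N:ℝ))|) →
      pdist M N θ i < tauC / (M:ℝ) := by
    intro i hfar
    have hsum : ∑ k ∈ Finset.range M, fejerN N (2 * π * (θ k - (i:ℝ)/(N:ℝ)))
        ≤ 2 * (1 / (2 + 2/π) ^ 2) + 1/9 := by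
      apply TCD.detect_bound M N hN8 _ (fun k => TCD.rep (θ k - (i:ℝ)/(N:ℝ)))
      · intro k hk
        obtain ⟨m, hm⟩ := TCD.rep_spec (θ k - (i:ℝ)/(N:ℝ))
        have h1 := hfar k hk
        have hpos : (0:ℝ) < 1/(N:ℝ) := by positivity
        exact TCD.fejerN_le_inv N hN1 _ _ m hm (TCD.rep_lo _) (TCD.rep_hi _)
          (by intro h0; rw [h0, abs_zero] at h1; linarith)
      · intro k hk
        obtain ⟨m, hm⟩ := TCD.rep_spec (θ k - (i:ℝ)/(N:ℝ))
        exact TCD.fejerN_le_beta N hN1 _ _ m hm (TCD.rep_lo _) (TCD.rep_hi _) (hfar k hk)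
      · intro k l hk hl hne
        have hu : ∃ m : ℤ, θ k - θ l - (TCD.rep (θ k - (i:ℝ)/(N:ℝ)) - TCD.rep (θ l - (i:ℝ)/(N:ℝ))) = (m:ℝ) := by
          obtain ⟨mk, hmk⟩ := TCD.rep_spec (θ k - (i:ℝ)/(N:ℝ))
          obtain ⟨ml, hml⟩ := TCD.rep_spec (θ l - (i:ℝ)/(N:ℝ))
          refine ⟨mk - ml, ?_⟩
          push_cast
          linarith
        have habs : |TCD.rep (θ k - (i:ℝ)/(N:ℝ)) - TCD.rep (θ l - (i:ℝ)/(N:ℝ))| < 1 := by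
          have a1 := TCD.rep_lo (θ k - (i:ℝ)/(N:ℝ))
          have a2 := TCD.rep_hi (θ k - (i:ℝ)/(N:ℝ))
          have a3 := TCD.rep_lo (θ l - (i:ℝ)/(N:ℝ))
          have a4 := TCD.rep_hi (θ l - (i:ℝ)/(N:ℝ))
          rw [abs_lt]; constructor <;> linarith
        exact hsep_pair k l hk hl hne _ hu habs
    have hlt : ∑ k ∈ Finset.range M, fejerN N (2 * π * (θ k - (i:ℝ)/(N:ℝ))) < tauC := by
      have := TCD.numeric
      rw [tauC]
      linarith
    have hpd : pdist M N θ i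
        = 1/(M:ℝ) * ∑ k ∈ Finset.range M, fejerN N (2*π*(θ k - (i:ℝ)/(N:ℝ))) := rfl
    rw [hpd, show tauC / (M:ℝ) = 1/(M:ℝ) * tauC by ring]
    apply mul_lt_mul_of_pos_left hlt (by positivity)
  have hdetect : ∀ i : ℤ, tauC/(M:ℝ) ≤ pdist M N θ i →
      ∃ k, k < M ∧ |TCD.rep (θ k - (i:ℝ)/(N:ℝ))| < 1/(N:ℝ) := by
    intro i hp
    by_contra hcon
    push_neg at hcon
    exact absurd (hthresh i hcon) (not_lt.mpr hp)
  obtain ⟨k, hkM, hk0⟩ := hdetect j hpj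
  obtain ⟨k', hk'M, hk1⟩ := hdetect (j+1) hpj1
  have ecast1 : ((j+1 : ℤ):ℝ) = (j:ℝ) + 1 := by push_cast; ring
  rw [ecast1] at hk1
  obtain ⟨m0, hm0⟩ := TCD.rep_spec (θ k - (j:ℝ)/(N:ℝ))
  obtain ⟨m1, hm1⟩ := TCD.rep_spec (θ k' - ((j:ℝ)+1)/(N:ℝ))
  have hlo0 := TCD.rep_lo (θ k - (j:ℝ)/(N:ℝ))
  have hhi0 := TCD.rep_hi (θ k - (j:ℝ)/(N:ℝ))
  have hlo1 := TCD.rep_lo (θ k' - ((j:ℝ)+1)/(N:ℝ))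
  have hhi1 := TCD.rep_hi (θ k' - ((j:ℝ)+1)/(N:ℝ))
  obtain ⟨r0, hr0⟩ : ∃ r, TCD.rep (θ k - (j:ℝ)/(N:ℝ)) = r := ⟨_, rfl⟩
  obtain ⟨r1, hr1⟩ : ∃ r, TCD.rep (θ k' - ((j:ℝ)+1)/(N:ℝ)) = r := ⟨_, rfl⟩
  rw [hr0] at hm0 hk0 hlo0 hhi0
  rw [hr1] at hm1 hk1 hlo1 hhi1
  have ediv : ((j:ℝ)+1)/(N:ℝ) = (j:ℝ)/(N:ℝ) + 1/(N:ℝ) := by ring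
  obtain ⟨hk0a, hk0b⟩ := abs_lt.mp hk0
  obtain ⟨hk1a, hk1b⟩ := abs_lt.mp hk1
  have h3N : 3/(N:ℝ) = 1/(N:ℝ) + 1/(N:ℝ) + 1/(N:ℝ) := by ring
  have h2N' : 2/(N:ℝ) = 1/(N:ℝ) + 1/(N:ℝ) := by ring
  have hkk : k' = k := by
    by_contra hne
    have hu : ∃ m : ℤ, θ k - θ k' - (r0 - 1/(N:ℝ) - r1) = (m:ℝ) := by
      refine ⟨m0 - m1, ?_⟩
      push_cast
      rw [ediv] at hm1
      linarith
    have habs3 : |r0 - 1/(N:ℝ) - r1| < 3/(N:ℝ) := by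
      rw [abs_lt]; constructor <;> linarith
    have habs1 : |r0 - 1/(N:ℝ) - r1| < 1 := by
      have : 3/(N:ℝ) ≤ 3/8 := by rw [div_le_div_iff₀ hN0 (by norm_num)]; linarith
      linarith
    have := hsep_pair k k' hkM hk'M (fun h => hne h.symm) _ hu habs1
    linarith
  rw [hkk] at hm1
  have hwin : r1 = r0 - 1/(N:ℝ) := by
    apply TCD.int_window r1 (r0 - 1/(N:ℝ)) (by linarith) (by linarith)
      (by linarith) (by linarith)
    refine ⟨m0 - m1, ?_⟩
    push_cast
    rw [ediv] at hm1
    linarith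
  have hr0pos : 0 < r0 := by
    rw [hwin] at hk1a
    linarith
  refine ⟨?_, ?_, k, hkM, -m0, ?_⟩
  · apply hthresh (j-1)
    intro l hl
    have ecast2 : ((j-1 : ℤ):ℝ) = (j:ℝ) - 1 := by push_cast; ring
    rw [ecast2]
    obtain ⟨ml, hml⟩ := TCD.rep_spec (θ l - ((j:ℝ)-1)/(N:ℝ))
    have ediv2 : ((j:ℝ)-1)/(N:ℝ) = (j:ℝ)/(N:ℝ) - 1/(N:ℝ) := by ring
    by_cases hlk : l = k
    · subst hlk
      have hwin2 : TCD.rep (θ l - ((j:ℝ)-1)/(N:ℝ)) = r0 + 1/(N:ℝ) := by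
        apply TCD.int_window _ _ (TCD.rep_lo _) (TCD.rep_hi _)
          (by linarith) (by linarith)
        refine ⟨m0 - ml, ?_⟩
        push_cast
        linarith [ediv2]
      rw [hwin2, abs_of_pos (by linarith)]
      linarith
    · by_contra hcon
      push_neg at hcon
      obtain ⟨hca, hcb⟩ := abs_lt.mp hcon
      have hu : ∃ m : ℤ, θ l - θ k - (TCD.rep (θ l - ((j:ℝ)-1)/(N:ℝ)) - r0 - 1/(N:ℝ)) = (m:ℝ) := by
        refine ⟨ml - m0, ?_⟩
        push_cast
        linarith [ediv2]
      have habs3 : |TCD.rep (θ l - ((j:ℝ)-1)/(N:ℝ)) - r0 - 1/(N:ℝ)| < 3/(N:ℝ) := by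
        rw [abs_lt]; constructor <;> linarith
      have habs1 : |TCD.rep (θ l - ((j:ℝ)-1)/(N:ℝ)) - r0 - 1/(N:ℝ)| < 1 := by
        have : 3/(N:ℝ) ≤ 3/8 := by rw [div_le_div_iff₀ hN0 (by norm_num)]; linarith
        linarith
      have := hsep_pair l k hl hkM hlk _ hu habs1
      linarith
  · apply hthresh (j+2)
    intro l hl
    have ecast3 : ((j+2 : ℤ):ℝ) = (j:ℝ) + 2 := by push_cast; ring
    rw [ecast3]
    obtain ⟨ml, hml⟩ := TCD.rep_spec (θ l - ((j:ℝ)+2)/(N:ℝ))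
    have ediv3 : ((j:ℝ)+2)/(N:ℝ) = (j:ℝ)/(N:ℝ) + 2/(N:ℝ) := by ring
    have h2N : 2/(N:ℝ) ≤ 1/4 := by rw [div_le_div_iff₀ hN0 (by norm_num)]; linarith
    by_cases hlk : l = k
    · subst hlk
      have hwin2 : TCD.rep (θ l - ((j:ℝ)+2)/(N:ℝ)) = r0 - 2/(N:ℝ) := by
        apply TCD.int_window _ _ (TCD.rep_lo _) (TCD.rep_hi _)
          (by linarith) (by linarith)
        refine ⟨m0 - ml, ?_⟩
        push_cast
        linarith [ediv3]
      rw [hwin2, abs_of_neg (by linarith)]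
      linarith
    · by_contra hcon
      push_neg at hcon
      obtain ⟨hca, hcb⟩ := abs_lt.mp hcon
      have hu : ∃ m : ℤ, θ l - θ k - (TCD.rep (θ l - ((j:ℝ)+2)/(N:ℝ)) - r0 + 2/(N:ℝ)) = (m:ℝ) := by
        refine ⟨ml - m0, ?_⟩
        push_cast
        linarith [ediv3]
      have habs3 : |TCD.rep (θ l - ((j:ℝ)+2)/(N:ℝ)) - r0 + 2/(N:ℝ)| < 3/(N:ℝ) := by
        rw [abs_lt]; constructor <;> linarith
      have habs1 : |TCD.rep (θ l - ((j:ℝ)+2)/(N:ℝ)) - r0 + 2/(N:ℝ)| < 1 := by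
        have : 3/(N:ℝ) ≤ 3/8 := by rw [div_le_div_iff₀ hN0 (by norm_num)]; linarith
        linarith
      have := hsep_pair l k hl hkM hlk _ hu habs1
      linarith
  · rw [Set.mem_Icc]
    constructor
    · push_cast
      have : θ k + -(m0:ℝ) = r0 + (j:ℝ)/(N:ℝ) := by linarith
      rw [this]
      linarith
    · push_cast
      have : θ k + -(m0:ℝ) = r0 + (j:ℝ)/(N:ℝ) := by linarith
      rw [this, ediv]
      linarith
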